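/- The number of parallelogram polyominoes with perimeter 2n equals the Catalan number C_{n−1}. -/

import Mathlib

/-- A parallelogram (staircase) polyomino, described column by column: it has
`w ≥ 1` columns, the `i`-th column occupying cells in rows `b i` to `t i`
(inclusive).  The bottom and top profiles are weakly increasing (staircase
condition), successive columns share an edge, and the polyomino touches the
bottom-left corner of its bounding rectangle (`b 0 = 0`; by monotonicity it
then automatically touches the top-right corner). -/
structure ParallelogramPolyomino where
  w : ℕ
  hw : 0 < w
  b : Fin w → ℕ
  t : Fin w → ℕ
  hbt : ∀ i, b i ≤ t i
  hbmono : Monotone b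
  htmono : Monotone t
  hconn : ∀ i j : Fin w, (j : ℕ) = (i : ℕ) + 1 → b j ≤ t i
  hb0 : b ⟨0, hw⟩ = 0

/-- The height of the bounding rectangle: one more than the top row of the
last column. -/
def ParallelogramPolyomino.height (P : ParallelogramPolyomino) : ℕ :=
  P.t ⟨P.w - 1, Nat.sub_lt P.hw Nat.one_pos⟩ + 1

/-- The perimeter of (the bounding rectangle of) a parallelogram polyomino:
twice the sum of the width and the height. -/
def ParallelogramPolyomino.perimeter (P : ParallelogramPolyomino) : ℕ :=
  2 * (P.w + P.height)

/-!
Call a column `c > 0` of a parallelogram polyomino a *cut* if it meets column `c - 1` in a single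
row. Cutting at the last cut splits a polyomino `P` as `glue L R`: `L` is formed by the columns
before the cut, `R` by the remaining ones, shifted down, and `R` is cut-free. If there is no cut,
`L` is empty and `R = P`. A cut-free polyomino arises from a unique possibly empty polyomino by
putting one more cell on top of every column, the empty one giving the single cell. Hence
`(L, R) ↦ glue L (cap R)` is a bijection from pairs of possibly empty polyominoes onto
polyominoes, under which the size (semiperimeter minus one) is `size L + size R + 1`: this is the
recursion `C (k + 1) = ∑ i ≤ k, C i * C (k - i)`.
-/

open Finset

theorem Nat.card_subtype_add_eq_sum_antidiagonal {α β : Type*} (f : α → ℕ) (g : β → ℕ)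
    [∀ i, Finite {a // f a = i}] [∀ j, Finite {b // g b = j}] (n : ℕ) :
    Nat.card {p : α × β // f p.1 + g p.2 = n} =
      ∑ ij ∈ antidiagonal n, Nat.card {a // f a = ij.1} * Nat.card {b // g b = ij.2} := by
  let e : {p : α × β // f p.1 + g p.2 = n} ≃
      Σ ij : antidiagonal n, {a // f a = ij.1.1} × {b // g b = ij.1.2} :=
    { toFun p := ⟨⟨(f p.1.1, g p.1.2), mem_antidiagonal.2 p.2⟩, ⟨p.1.1, rfl⟩, ⟨p.1.2, rfl⟩⟩
      invFun x := ⟨(x.2.1, x.2.2), by rw [x.2.1.2, x.2.2.2]; exact mem_antidiagonal.1 x.1.2⟩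
      left_inv _ := rfl
      right_inv := by
        rintro ⟨⟨⟨i, j⟩, hij⟩, ⟨a, ha⟩, ⟨b, hb⟩⟩
        dsimp only at ha hb
        subst ha hb
        rfl }
  rw [Nat.card_congr e, Nat.card_sigma]
  simp only [Nat.card_prod]
  exact sum_coe_sort _ fun ij : ℕ × ℕ => Nat.card {a // f a = ij.1} * Nat.card {b // g b = ij.2}

theorem monotone_fin_of_le_add_one {α : Type*} [Preorder α] {w : ℕ} {f : ℕ → α}
    (hf : ∀ i, i + 1 < w → f i ≤ f (i + 1)) : Monotone fun i : Fin w => f i :=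
  fun i j hij => monotoneOn_of_le_add_one Set.ordConnected_Iio (fun a _ _ ha => hf a ha)
    i.isLt j.isLt hij

namespace ParallelogramPolyomino

section Profiles

variable (P : ParallelogramPolyomino)

/-- The bottom row of column `i`, where columns past the last one read as the last one, so that
`bot` and `top` are monotone on all of `ℕ`. -/
def bot (i : ℕ) : ℕ := P.b ⟨min i (P.w - 1), by have := P.hw; omega⟩

def top (i : ℕ) : ℕ := P.t ⟨min i (P.w - 1), by have := P.hw; omega⟩

lemma bot_apply (i : Fin P.w) : P.bot i = P.b i :=
  congrArg P.b (Fin.ext (min_eq_left (by have := i.isLt; omega)))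

lemma top_apply (i : Fin P.w) : P.top i = P.t i :=
  congrArg P.t (Fin.ext (min_eq_left (by have := i.isLt; omega)))

lemma bot_mono : Monotone P.bot := fun _ _ h => P.hbmono (Fin.mk_le_mk.2 (by omega))

lemma top_mono : Monotone P.top := fun _ _ h => P.htmono (Fin.mk_le_mk.2 (by omega))

lemma bot_le_top (i : ℕ) : P.bot i ≤ P.top i := P.hbt _

lemma bot_zero : P.bot 0 = 0 := by simp [bot, P.hb0]

lemma bot_succ_le_top {i : ℕ} (h : i + 1 < P.w) : P.bot (i + 1) ≤ P.top i :=
  (P.bot_apply ⟨i + 1, h⟩).trans_le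
    ((P.hconn _ _ rfl).trans_eq (P.top_apply ⟨i, by omega⟩).symm)

lemma step {i : ℕ} (h : i + 1 < P.w) :
    P.bot i ≤ P.bot (i + 1) ∧ P.top i ≤ P.top (i + 1) ∧ P.bot (i + 1) ≤ P.top i :=
  ⟨P.bot_mono (by omega), P.top_mono (by omega), P.bot_succ_le_top h⟩

def size : ℕ := P.w + P.top (P.w - 1)

lemma perimeter_eq : P.perimeter = 2 * (P.size + 1) := by
  simp only [perimeter, height, size, top, min_self]
  ring

lemma top_le_top_last (i : ℕ) : P.top i ≤ P.top (P.w - 1) :=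
  P.htmono (Fin.mk_le_mk.2 (by omega))

lemma top_le_size (i : ℕ) : P.top i ≤ P.size :=
  (P.top_le_top_last i).trans (Nat.le_add_left _ _)

lemma w_le_size : P.w ≤ P.size := Nat.le_add_right _ _

lemma size_pos : 0 < P.size := P.hw.trans_le P.w_le_size

theorem ext_profiles {P Q : ParallelogramPolyomino} (hw : P.w = Q.w)
    (hb : ∀ i < P.w, P.bot i = Q.bot i) (ht : ∀ i < P.w, P.top i = Q.top i) : P = Q := by
  obtain ⟨w, _, b, t⟩ := P
  obtain ⟨w', _, b', t'⟩ := Q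
  obtain rfl : w = w' := hw
  have hb' : b = b' := funext fun i => by simpa [bot_apply] using hb i i.isLt
  have ht' : t = t' := funext fun i => by simpa [top_apply] using ht i i.isLt
  subst hb' ht'
  rfl

end Profiles

def ofProfiles (w : ℕ) (hw : 0 < w) (bot top : ℕ → ℕ) (hbot : bot 0 = 0)
    (hstep : ∀ i, i + 1 < w → bot i ≤ bot (i + 1) ∧ top i ≤ top (i + 1) ∧ bot (i + 1) ≤ top i) :
    ParallelogramPolyomino where
  w := w
  hw := hw
  b i := bot i
  t i := top i
  hbt := by
    rintro ⟨i, hi⟩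
    induction i with
    | zero => simp [hbot]
    | succ i ih =>
      have := hstep i hi
      have := ih (by omega)
      dsimp only at *
      omega
  hbmono := monotone_fin_of_le_add_one fun i hi => (hstep i hi).1
  htmono := monotone_fin_of_le_add_one fun i hi => (hstep i hi).2.1
  hconn i j hij := by
    have := (hstep i (hij ▸ j.isLt)).2.2
    simp only [hij]
    exact this
  hb0 := hbot

section OfProfiles

variable {w : ℕ} {hw : 0 < w} {bot top : ℕ → ℕ} {hbot : bot 0 = 0}
  {hstep : ∀ i, i + 1 < w → bot i ≤ bot (i + 1) ∧ top i ≤ top (i + 1) ∧ bot (i + 1) ≤ top i}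
  {i : ℕ}

@[simp] lemma w_ofProfiles : (ofProfiles w hw bot top hbot hstep).w = w := rfl

lemma bot_ofProfiles (hi : i < w) : (ofProfiles w hw bot top hbot hstep).bot i = bot i := by
  change bot (min i (w - 1)) = bot i
  rw [min_eq_left (by omega)]

lemma top_ofProfiles (hi : i < w) : (ofProfiles w hw bot top hbot hstep).top i = top i := by
  change top (min i (w - 1)) = top i
  rw [min_eq_left (by omega)]

end OfProfiles

section Glue

variable (L R : ParallelogramPolyomino)

def glue : ParallelogramPolyomino :=
  ofProfiles (L.w + R.w) (by have := L.hw; omega)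
    (fun i => if i < L.w then L.bot i else R.bot (i - L.w) + L.top (L.w - 1))
    (fun i => if i < L.w then L.top i else R.top (i - L.w) + L.top (L.w - 1))
    (by simp [L.hw, L.bot_zero])
    (fun i hi => by
      rcases lt_trichotomy (i + 1) L.w with h | h | h
      · simpa [h, show i < L.w by omega] using L.step h
      · have := L.bot_le_top i
        simp only [show i < L.w by omega, show ¬ i + 1 < L.w by omega, if_true, if_false,
          show i + 1 - L.w = 0 by omega, show L.w - 1 = i by omega, R.bot_zero]
        omega
      · obtain ⟨j, rfl⟩ : ∃ j, i = L.w + j := ⟨i - L.w, by omega⟩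
        have := R.step (i := j) (by omega)
        simp only [show ¬ L.w + j < L.w by omega, show ¬ L.w + j + 1 < L.w by omega, if_false,
          show L.w + j - L.w = j by omega, show L.w + j + 1 - L.w = j + 1 by omega]
        omega)

@[simp] lemma w_glue : (glue L R).w = L.w + R.w := rfl

variable {L R} {i : ℕ}

lemma bot_glue_of_lt (h : i < L.w) : (glue L R).bot i = L.bot i := by
  rw [glue, bot_ofProfiles (by omega), if_pos h]

lemma top_glue_of_lt (h : i < L.w) : (glue L R).top i = L.top i := by
  rw [glue, top_ofProfiles (by omega), if_pos h]

lemma bot_glue_add (h : i < R.w) : (glue L R).bot (L.w + i) = R.bot i + L.top (L.w - 1) := by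
  rw [glue, bot_ofProfiles (by omega), if_neg (by omega), Nat.add_sub_cancel_left]

lemma top_glue_add (h : i < R.w) : (glue L R).top (L.w + i) = R.top i + L.top (L.w - 1) := by
  rw [glue, top_ofProfiles (by omega), if_neg (by omega), Nat.add_sub_cancel_left]

variable (L R)

lemma size_glue : (glue L R).size = L.size + R.size := by
  have := R.hw
  have h := top_glue_add (L := L) (R := R) (i := R.w - 1) (by omega)
  rw [show L.w + (R.w - 1) = L.w + R.w - 1 by omega] at h
  simp only [size, w_glue]
  rw [h]
  omega

end Glue

/-- `none` stands for the empty polyomino. -/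
def sizeOpt : Option ParallelogramPolyomino → ℕ
  | none => 0
  | some P => P.size

def cap : Option ParallelogramPolyomino → ParallelogramPolyomino
  | none => ofProfiles 1 one_pos (fun _ => 0) (fun _ => 0) rfl (fun _ _ => by omega)
  | some P => ofProfiles P.w P.hw P.bot (fun i => P.top i + 1) P.bot_zero
      (fun _ hi => by have := P.step hi; omega)

def IsCutFree (P : ParallelogramPolyomino) : Prop :=
  ∀ i, i + 1 < P.w → P.bot (i + 1) < P.top i

section Cap

variable {P : ParallelogramPolyomino} {i : ℕ}

@[simp] lemma w_cap_none : (cap none).w = 1 := rfl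

@[simp] lemma w_cap_some : (cap (some P)).w = P.w := rfl

lemma top_cap_none : (cap none).top i = 0 := rfl

lemma bot_cap_some (hi : i < P.w) : (cap (some P)).bot i = P.bot i := by
  rw [cap, bot_ofProfiles hi]

lemma top_cap_some (hi : i < P.w) : (cap (some P)).top i = P.top i + 1 := by
  rw [cap, top_ofProfiles hi]

variable (x : Option ParallelogramPolyomino)

lemma size_cap : (cap x).size = sizeOpt x + 1 := by
  cases x with
  | none => rfl
  | some P =>
    have := P.hw
    simp only [size, w_cap_some, sizeOpt, top_cap_some (show P.w - 1 < P.w by omega)]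
    omega

lemma isCutFree_cap : (cap x).IsCutFree := by
  cases x with
  | none => intro i hi; simp at hi
  | some P =>
    intro i hi
    rw [w_cap_some] at hi
    rw [bot_cap_some hi, top_cap_some (by omega)]
    have := P.bot_succ_le_top hi
    omega

lemma cap_injective : Function.Injective cap := by
  rintro (_ | P) (_ | Q) h
  · rfl
  · have h0 := congrArg (top · 0) h
    simp only [top_cap_none, top_cap_some Q.hw] at h0
    omega
  · have h0 := congrArg (top · 0) h
    simp only [top_cap_none, top_cap_some P.hw] at h0
    omega
  · have hw : P.w = Q.w := congrArg (·.w) h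
    refine congrArg some <| ext_profiles hw (fun i hi => ?_) (fun i hi => ?_)
    · simpa [bot_cap_some, hi, hw ▸ hi] using congrArg (bot · i) h
    · simpa [top_cap_some, hi, hw ▸ hi] using congrArg (top · i) h

end Cap

theorem exists_cap_eq {P : ParallelogramPolyomino} (hP : P.IsCutFree) : ∃ x, cap x = P := by
  unfold IsCutFree at hP
  have hw := P.hw
  by_cases h0 : P.top (P.w - 1) = 0
  · have hw1 : P.w = 1 := by
      by_contra hne
      have := hP 0 (by omega)
      have := P.top_mono (show 0 ≤ P.w - 1 by omega)
      omega
    refine ⟨none, ext_profiles (by simp [hw1]) (fun i hi => ?_) (fun i hi => ?_)⟩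
    · simp only [w_cap_none] at hi
      simp [show i = 0 by omega, P.bot_zero, cap, bot_ofProfiles]
    · simp only [w_cap_none] at hi
      rw [hw1] at h0
      rw [top_cap_none, show i = 0 by omega, h0]
  · have htop_pos : ∀ i < P.w, 0 < P.top i := by
      intro i hi
      rcases Nat.lt_or_ge (i + 1) P.w with h | h
      · exact lt_of_le_of_lt (Nat.zero_le _) (hP i h)
      · rw [show i = P.w - 1 by omega]; omega
    let Q := ofProfiles P.w hw P.bot (fun i => P.top i - 1) P.bot_zero
      (fun i hi => by have := P.step hi; have := hP i hi; omega)
    refine ⟨some Q, ext_profiles rfl (fun i hi => ?_) (fun i hi => ?_)⟩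
    · exact (bot_cap_some (P := Q) hi).trans (bot_ofProfiles (w := P.w) hi)
    · rw [top_cap_some (P := Q) hi, top_ofProfiles (w := P.w) hi]
      have := htop_pos i hi
      omega

section Cut

variable (L R : ParallelogramPolyomino)

lemma bot_glue_eq_top : (glue L R).bot L.w = (glue L R).top (L.w - 1) := by
  have := L.hw
  have h := bot_glue_add (L := L) (R := R) (i := 0) R.hw
  rw [add_zero, R.bot_zero, zero_add] at h
  rw [h, top_glue_of_lt (by omega)]

lemma not_isCutFree_glue : ¬ (glue L R).IsCutFree := fun h => by
  have := L.hw
  have := h (L.w - 1) (by simp only [w_glue]; have := R.hw; omega)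
  rw [Nat.sub_add_cancel L.hw, bot_glue_eq_top] at this
  exact lt_irrefl _ this

variable {L R}

lemma bot_glue_succ_lt_top (hR : R.IsCutFree) {i : ℕ} (h : L.w ≤ i)
    (hi : i + 1 < L.w + R.w) : (glue L R).bot (i + 1) < (glue L R).top i := by
  obtain ⟨j, rfl⟩ : ∃ j, i = L.w + j := ⟨i - L.w, by omega⟩
  rw [add_assoc, bot_glue_add (by omega), top_glue_add (by omega)]
  have := hR j (by omega)
  omega

lemma w_eq_of_glue_eq {L' R' : ParallelogramPolyomino} (hR : R.IsCutFree)
    (hR' : R'.IsCutFree) (h : glue L R = glue L' R') : L.w = L'.w := by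
  have hwt : L.w + R.w = L'.w + R'.w := congrArg (·.w) h
  have := L.hw
  have := L'.hw
  rcases lt_trichotomy L.w L'.w with hlt | heq | hgt
  · have h1 := bot_glue_succ_lt_top (L := L) hR (i := L'.w - 1) (by omega) (by have := R'.hw; omega)
    rw [h, Nat.sub_add_cancel L'.hw, bot_glue_eq_top] at h1
    exact absurd h1 (lt_irrefl _)
  · exact heq
  · have h1 := bot_glue_succ_lt_top (L := L') hR' (i := L.w - 1) (by omega) (by have := R.hw; omega)
    rw [← h, Nat.sub_add_cancel L.hw, bot_glue_eq_top] at h1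
    exact absurd h1 (lt_irrefl _)

lemma glue_inj {L' R' : ParallelogramPolyomino} (hw : L.w = L'.w) (h : glue L R = glue L' R') :
    L = L' ∧ R = R' := by
  have hRw : R.w = R'.w := by have : L.w + R.w = L'.w + R'.w := congrArg (·.w) h; omega
  have hL : L = L' := ext_profiles hw
    (fun i hi => by rw [← bot_glue_of_lt (R := R) hi, h, bot_glue_of_lt (hw ▸ hi)])
    (fun i hi => by rw [← top_glue_of_lt (R := R) hi, h, top_glue_of_lt (hw ▸ hi)])
  subst hL
  refine ⟨rfl, ext_profiles hRw (fun i hi => ?_) (fun i hi => ?_)⟩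
  · have := bot_glue_add (L := L) (R := R) hi
    rw [h, bot_glue_add (hRw ▸ hi)] at this
    omega
  · have := top_glue_add (L := L) (R := R) hi
    rw [h, top_glue_add (hRw ▸ hi)] at this
    omega

end Cut

section TakeDrop

variable (P : ParallelogramPolyomino) {c : ℕ}

def take (hc : 0 < c) (hcw : c ≤ P.w) : ParallelogramPolyomino :=
  ofProfiles c hc P.bot P.top P.bot_zero fun _ hi => P.step (by omega)

def drop (hcw : c < P.w) : ParallelogramPolyomino :=
  ofProfiles (P.w - c) (by omega) (fun i => P.bot (c + i) - P.bot c)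
    (fun i => P.top (c + i) - P.bot c) (by simp) fun i hi => by
      simp only [← add_assoc]
      have := P.step (i := c + i) (by omega)
      have := P.bot_mono (show c ≤ c + i by omega)
      omega

@[simp] lemma w_take (hc : 0 < c) (hcw : c ≤ P.w) : (P.take hc hcw).w = c := rfl

@[simp] lemma w_drop (hcw : c < P.w) : (P.drop hcw).w = P.w - c := rfl

variable {P} {i : ℕ}

lemma bot_take {hc : 0 < c} {hcw : c ≤ P.w} (hi : i < c) : (P.take hc hcw).bot i = P.bot i := by
  rw [take, bot_ofProfiles hi]

lemma top_take {hc : 0 < c} {hcw : c ≤ P.w} (hi : i < c) : (P.take hc hcw).top i = P.top i := by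
  rw [take, top_ofProfiles hi]

lemma bot_drop {hcw : c < P.w} (hi : i < P.w - c) :
    (P.drop hcw).bot i = P.bot (c + i) - P.bot c := by
  rw [drop, bot_ofProfiles hi]

lemma top_drop {hcw : c < P.w} (hi : i < P.w - c) :
    (P.drop hcw).top i = P.top (c + i) - P.bot c := by
  rw [drop, top_ofProfiles hi]

lemma glue_take_drop (hc : 0 < c) (hcw : c < P.w) (hcut : P.bot c = P.top (c - 1)) :
    glue (P.take hc hcw.le) (P.drop hcw) = P := by
  refine ext_profiles (show c + (P.w - c) = P.w by omega) (fun i hi => ?_) (fun i hi => ?_)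
    <;> simp only [w_glue, w_take, w_drop] at hi <;> rcases Nat.lt_or_ge i c with h | h
  · exact (bot_glue_of_lt h).trans (bot_take h)
  · obtain ⟨j, rfl⟩ : ∃ j, i = c + j := ⟨i - c, by omega⟩
    rw [show c + j = (P.take hc hcw.le).w + j from rfl, bot_glue_add (by simp; omega),
      bot_drop (by omega), w_take, top_take (by omega)]
    have := P.bot_mono (show c ≤ c + j by omega)
    omega
  · exact (top_glue_of_lt h).trans (top_take h)
  · obtain ⟨j, rfl⟩ : ∃ j, i = c + j := ⟨i - c, by omega⟩
    rw [show c + j = (P.take hc hcw.le).w + j from rfl, top_glue_add (by simp; omega),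
      top_drop (by omega), w_take, top_take (by omega)]
    have := P.bot_le_top (c + j)
    have := P.bot_mono (show c ≤ c + j by omega)
    omega

lemma isCutFree_drop (hcw : c < P.w)
    (hlast : ∀ i, c ≤ i → i + 1 < P.w → P.bot (i + 1) < P.top i) : (P.drop hcw).IsCutFree := by
  intro i hi
  rw [w_drop] at hi
  rw [bot_drop hi, top_drop (by omega), ← add_assoc]
  have := hlast (c + i) (by omega) (by omega)
  have := P.bot_mono (show c ≤ c + i + 1 by omega)
  omega

theorem exists_last_cut (hP : ¬ P.IsCutFree) :
    ∃ c, 0 < c ∧ c < P.w ∧ P.bot c = P.top (c - 1) ∧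
      ∀ i, c ≤ i → i + 1 < P.w → P.bot (i + 1) < P.top i := by
  unfold IsCutFree at hP
  push Not at hP
  obtain ⟨k, hk, hkcut⟩ := hP
  have hcut_succ : 0 < k + 1 ∧ P.bot (k + 1) = P.top (k + 1 - 1) :=
    ⟨k.succ_pos, le_antisymm (P.bot_succ_le_top hk) hkcut⟩
  obtain ⟨hc, hcut⟩ := Nat.findGreatest_spec (P := fun i => 0 < i ∧ P.bot i = P.top (i - 1))
    (show k + 1 ≤ P.w - 1 by omega) hcut_succ
  refine ⟨_, hc, lt_of_le_of_lt (Nat.findGreatest_le _) (by omega), hcut, fun i hci hi => ?_⟩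
  have hnot := Nat.findGreatest_is_greatest
    (P := fun i => 0 < i ∧ P.bot i = P.top (i - 1)) (show _ < i + 1 by omega)
    (show i + 1 ≤ P.w - 1 by omega)
  simp only [Nat.add_sub_cancel, not_and] at hnot
  have := P.bot_succ_le_top hi
  have := hnot i.succ_pos
  omega

end TakeDrop

def node : Option ParallelogramPolyomino → Option ParallelogramPolyomino → ParallelogramPolyomino
  | none, y => cap y
  | some L, y => glue L (cap y)

lemma size_node (x y : Option ParallelogramPolyomino) :
    (node x y).size = sizeOpt x + sizeOpt y + 1 := by
  cases x <;> simp [node, sizeOpt, size_glue, size_cap, add_assoc]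

theorem node_injective : Function.Injective fun p : Option ParallelogramPolyomino ×
    Option ParallelogramPolyomino => node p.1 p.2 := by
  rintro ⟨_ | L, y⟩ ⟨_ | L', y'⟩ h <;> simp only [node] at h
  · rw [cap_injective h]
  · exact absurd (h ▸ isCutFree_cap y) (not_isCutFree_glue _ _)
  · exact absurd (h ▸ isCutFree_cap y') (not_isCutFree_glue _ _)
  · obtain ⟨rfl, h'⟩ := glue_inj (w_eq_of_glue_eq (isCutFree_cap y) (isCutFree_cap y') h) h
    rw [cap_injective h']

theorem node_surjective (P : ParallelogramPolyomino) : ∃ x y, node x y = P := by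
  by_cases hP : P.IsCutFree
  · obtain ⟨y, rfl⟩ := exists_cap_eq hP
    exact ⟨none, y, rfl⟩
  · obtain ⟨c, hc, hcw, hcut, hlast⟩ := exists_last_cut hP
    obtain ⟨y, hy⟩ := exists_cap_eq (isCutFree_drop hcw hlast)
    exact ⟨some (P.take hc hcw.le), y, by rw [node, hy, glue_take_drop hc hcw hcut]⟩

noncomputable def nodeEquiv :
    Option ParallelogramPolyomino × Option ParallelogramPolyomino ≃ ParallelogramPolyomino :=
  Equiv.ofBijective _ ⟨node_injective, fun P =>
    let ⟨x, y, h⟩ := node_surjective P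
    ⟨(x, y), h⟩⟩

instance finite_size_eq (k : ℕ) : Finite {P : ParallelogramPolyomino // P.size = k} := by
  refine Finite.of_injective
    (β := Fin (k + 1) × (Fin (k + 1) → Fin (k + 1)) × (Fin (k + 1) → Fin (k + 1)))
    (fun P => (⟨P.1.w, Nat.lt_succ_of_le (P.2 ▸ P.1.w_le_size :)⟩,
      fun i => ⟨P.1.bot i,
        Nat.lt_succ_of_le (P.2 ▸ (P.1.bot_le_top i).trans (P.1.top_le_size i) :)⟩,
      fun i => ⟨P.1.top i, Nat.lt_succ_of_le (P.2 ▸ P.1.top_le_size i :)⟩)) ?_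
  rintro ⟨P, rfl⟩ ⟨Q, hQ⟩ h
  simp only [Prod.mk.injEq, Fin.mk.injEq, funext_iff] at h
  obtain ⟨hw, hbot, htop⟩ := h
  change P.w = Q.w at hw
  have hwk : P.w < P.size + 1 := Nat.lt_succ_of_le P.w_le_size
  exact Subtype.ext (ext_profiles (P := P) (Q := Q) hw (fun i hi => hbot ⟨i, by omega⟩)
    (fun i hi => htop ⟨i, by omega⟩))

instance finite_sizeOpt_eq (k : ℕ) : Finite {x : Option ParallelogramPolyomino // sizeOpt x = k} :=
  Finite.of_injective (β := Option {P : ParallelogramPolyomino // P.size = k})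
    (fun x => match x with
      | ⟨none, _⟩ => none
      | ⟨some P, h⟩ => some ⟨P, h⟩)
    (by
      rintro ⟨_ | P, hP⟩ ⟨_ | Q, hQ⟩ h
      all_goals simp only [reduceCtorEq, Option.some.injEq] at h
      · rfl
      · obtain rfl : P = Q := congrArg Subtype.val h
        rfl)

lemma card_size_eq_card_sizeOpt {k : ℕ} (hk : k ≠ 0) :
    Nat.card {P : ParallelogramPolyomino // P.size = k} =
      Nat.card {x : Option ParallelogramPolyomino // sizeOpt x = k} :=
  Nat.card_congr <| Equiv.ofBijective (fun P => ⟨some P.1, P.2⟩)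
    ⟨fun P Q h => Subtype.ext (Option.some_injective _ (congrArg Subtype.val h)), by
      rintro ⟨_ | P, hP⟩
      · exact absurd hP.symm hk
      · exact ⟨⟨P, hP⟩, rfl⟩⟩

lemma card_sizeOpt_zero : Nat.card {x : Option ParallelogramPolyomino // sizeOpt x = 0} = 1 := by
  have h : ∀ x : {x : Option ParallelogramPolyomino // sizeOpt x = 0}, x.1 = none := by
    rintro ⟨_ | P, hP⟩
    · rfl
    · exact absurd hP (size_pos P).ne'
  exact Nat.card_eq_one_iff_unique.2
    ⟨⟨fun x y => Subtype.ext ((h x).trans (h y).symm)⟩, ⟨⟨none, rfl⟩⟩⟩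

lemma card_sizeOpt_succ (k : ℕ) :
    Nat.card {x : Option ParallelogramPolyomino // sizeOpt x = k + 1} =
      ∑ ij ∈ antidiagonal k, Nat.card {x : Option ParallelogramPolyomino // sizeOpt x = ij.1} *
        Nat.card {x : Option ParallelogramPolyomino // sizeOpt x = ij.2} := by
  rw [← card_size_eq_card_sizeOpt k.succ_ne_zero,
    ← Nat.card_subtype_add_eq_sum_antidiagonal sizeOpt sizeOpt]
  exact Nat.card_congr (nodeEquiv.subtypeEquiv fun p => by
    change _ ↔ (node p.1 p.2).size = _
    rw [size_node]
    omega).symm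

theorem card_sizeOpt (k : ℕ) :
    Nat.card {x : Option ParallelogramPolyomino // sizeOpt x = k} = catalan k := by
  induction k using Nat.strong_induction_on with
  | _ k ih =>
    cases k with
    | zero => rw [card_sizeOpt_zero, catalan_zero]
    | succ k =>
      rw [card_sizeOpt_succ, catalan_succ']
      refine sum_congr rfl fun ij hij => ?_
      rw [HasAntidiagonal.mem_antidiagonal] at hij
      rw [ih _ (by omega), ih _ (by omega)]

end ParallelogramPolyomino

theorem card_parallelogram_polyomino (n : ℕ) (hn : 2 ≤ n) :
    Nat.card {P : ParallelogramPolyomino // P.perimeter = 2 * n}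
      = catalan (n - 1) := by
  have hsize (P : ParallelogramPolyomino) : P.perimeter = 2 * n ↔ P.size = n - 1 := by
    rw [P.perimeter_eq]
    omega
  rw [Nat.card_congr (Equiv.subtypeEquivRight hsize),
    ParallelogramPolyomino.card_size_eq_card_sizeOpt (by omega),
    ParallelogramPolyomino.card_sizeOpt]
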